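/- Let X and Y be real-valued random variables (possibly on different probability spaces, with probability measures P and Q respectively) whose moment generating functions are finite on a common open interval (−ε, ε) around 0 for some ε > 0. If Φ_X(t) = Φ_Y(t) for all t in this interval, then X and Y have the same distribution, i.e. the law of X under P equals the law of Y under Q. -/

import Mathlib

/-!
The complex moment generating function `z ↦ E[exp (z X)]` is holomorphic on the vertical strip
over the interval where the mgf is finite. Two such functions that agree on the real segment
agree on the whole strip by the identity theorem, in particular on the imaginary axis, where
they are the characteristic functions of the laws; and characteristic functions determine
finite measures on `ℝ`.
-/

open MeasureTheory ProbabilityTheory Filter Set Complex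
open scoped Topology

namespace ProbabilityTheory

variable {Ω Ω' : Type*} {mΩ : MeasurableSpace Ω} {mΩ' : MeasurableSpace Ω'}
  {X : Ω → ℝ} {Y : Ω' → ℝ} {μ : Measure Ω} {μ' : Measure Ω'} {s : Set ℝ}

lemma frequently_nhdsNE_ofReal_of_mem_nhds {p : ℂ → Prop} {t : ℝ} (hs : s ∈ 𝓝 t)
    (hp : ∀ x ∈ s, p x) : ∃ᶠ z in 𝓝[≠] (t : ℂ), p z := by
  have h_tendsto : Tendsto ((↑) : ℝ → ℂ) (𝓝[≠] t) (𝓝[≠] (t : ℂ)) :=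
    continuous_ofReal.continuousWithinAt.tendsto_nhdsWithin fun _ hx ↦ by simpa using hx
  exact h_tendsto.frequently (eventually_nhdsWithin_of_eventually_nhds
    (eventually_of_mem hs hp)).frequently

lemma eqOn_complexMGF_of_eqOn_mgf (hs_open : IsOpen s) (hs_conv : Convex ℝ s)
    (hs_ne : s.Nonempty) (hsX : s ⊆ integrableExpSet X μ) (hsY : s ⊆ integrableExpSet Y μ')
    (h : EqOn (mgf X μ) (mgf Y μ') s) :
    EqOn (complexMGF X μ) (complexMGF Y μ') {z | z.re ∈ s} := by
  have h_strip (Z : Set ℝ) (hZ : s ⊆ Z) : {z : ℂ | z.re ∈ s} ⊆ {z | z.re ∈ interior Z} :=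
    fun z hz ↦ interior_maximal hZ hs_open hz
  have hX : AnalyticOnNhd ℂ (complexMGF X μ) {z | z.re ∈ s} :=
    analyticOnNhd_complexMGF.mono (h_strip _ hsX)
  have hY : AnalyticOnNhd ℂ (complexMGF Y μ') {z | z.re ∈ s} :=
    analyticOnNhd_complexMGF.mono (h_strip _ hsY)
  obtain ⟨t, ht⟩ := hs_ne
  refine hX.eqOn_of_preconnected_of_frequently_eq hY
    (hs_conv.linear_preimage reLm).isPreconnected (z₀ := (t : ℂ)) (by simpa using ht) ?_
  refine frequently_nhdsNE_ofReal_of_mem_nhds (hs_open.mem_nhds ht) fun x hx ↦ ?_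
  rw [complexMGF_ofReal, complexMGF_ofReal, h hx]

theorem _root_.MeasureTheory.Measure.map_eq_of_eqOn_mgf [IsFiniteMeasure μ] [IsFiniteMeasure μ']
    (hX : AEMeasurable X μ) (hY : AEMeasurable Y μ') (hs_open : IsOpen s) (hs_conv : Convex ℝ s)
    (hs_zero : 0 ∈ s) (hsX : s ⊆ integrableExpSet X μ) (hsY : s ⊆ integrableExpSet Y μ')
    (h : EqOn (mgf X μ) (mgf Y μ') s) :
    μ.map X = μ'.map Y := by
  refine Measure.ext_of_charFun (funext fun t ↦ ?_)
  rw [← complexMGF_mul_I hX, ← complexMGF_mul_I hY]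
  exact eqOn_complexMGF_of_eqOn_mgf hs_open hs_conv ⟨0, hs_zero⟩ hsX hsY h (by simpa using hs_zero)

end ProbabilityTheory

/-- Two real random variables whose moment generating functions are finite and
agree on a common open interval `(-ε, ε)` around `0` have the same distribution. -/
theorem mgf_eq_on_interval_imp_law_eq {Ω Ω' : Type*}
    [MeasurableSpace Ω] [MeasurableSpace Ω']
    (P : Measure Ω) (Q : Measure Ω')
    [IsProbabilityMeasure P] [IsProbabilityMeasure Q]
    (X : Ω → ℝ) (Y : Ω' → ℝ) (hX : Measurable X) (hY : Measurable Y)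
    (ε : ℝ) (hε : 0 < ε)
    (hintX : ∀ t ∈ Set.Ioo (-ε) ε, Integrable (fun ω => Real.exp (t * X ω)) P)
    (hintY : ∀ t ∈ Set.Ioo (-ε) ε, Integrable (fun ω => Real.exp (t * Y ω)) Q)
    (heq : ∀ t ∈ Set.Ioo (-ε) ε, mgf X P t = mgf Y Q t) :
    P.map X = Q.map Y :=
  Measure.map_eq_of_eqOn_mgf hX.aemeasurable hY.aemeasurable isOpen_Ioo (convex_Ioo _ _)
    ⟨neg_lt_zero.mpr hε, hε⟩ hintX hintY heq
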